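/- For every N ≥ 1, every K ∈ ℕ, and every pair of starting decks d₁, d₂ (permutations of Fin N), the total variation distance between the K-step distributions of the random-to-top shuffle satisfies TV(μ_K(d₁), μ_K(d₂)) ≤ N · ((N−1)/N)^K. -/

import Mathlib

open scoped ENNReal

/-- Total variation distance between two distributions: `(1/2) Σ_x |μ(x) − ν(x)|`. -/
noncomputable def tvDist {X : Type*} (μ ν : PMF X) : ℝ≥0∞ :=
  (1 / 2) * ∑' x, max (μ x - ν x) (ν x - μ x)

/-- The permutation of positions that cyclically shifts the block `0..j` one place to the right:
it sends `0 ↦ j`, `i ↦ i − 1` for `1 ≤ i ≤ j`, and fixes the positions above `j`. Composing a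
deck with this permutation moves the card at position `j` to the top and shifts the cards at
positions `0..j−1` down one place. -/
def moveToTop {N : ℕ} (j : Fin N) : Equiv.Perm (Fin N) :=
  (List.range (j : ℕ)).foldl
    (fun acc k =>
      Equiv.swap (⟨k % N, Nat.mod_lt k j.pos⟩ : Fin N)
          (⟨(k + 1) % N, Nat.mod_lt (k + 1) j.pos⟩ : Fin N) * acc)
    1

/-- One step of the random-to-top shuffle: sample a position `j` uniformly and move the card at
position `j` to the top of the deck. -/
noncomputable def rtopStep {N : ℕ} (h : 0 < N) (d : Equiv.Perm (Fin N)) :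
    PMF (Equiv.Perm (Fin N)) :=
  haveI : Nonempty (Fin N) := ⟨⟨0, h⟩⟩
  (PMF.uniformOfFintype (Fin N)).bind fun j => PMF.pure (d * moveToTop j)

/-- Distribution of the deck after `K` steps of the random-to-top shuffle starting from `d`. -/
noncomputable def rtopWalk {N : ℕ} (h : 0 < N) (d : Equiv.Perm (Fin N)) :
    ℕ → PMF (Equiv.Perm (Fin N))
  | 0 => PMF.pure d
  | (K + 1) => (rtopWalk h d K).bind (rtopStep h)

/-!
Couple two copies of the shuffle by moving the same *card* (not the same position) to the top of
both decks. The cards moved so far then occupy, in both decks, a top block on which the decks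
agree, and this block grows by one whenever an untouched card is chosen. So the decks can differ
only while some card is untouched: with `t` cards touched, the probability that they still differ
after `K` more steps is at most the expected number `(N - t) ((N - 1) / N) ^ K` of cards that stay
untouched. The coupling inequality `TV ≤ P(X ≠ Y)` then gives the bound.
-/

namespace PMF

variable {α β : Type*}

theorem map_fst_apply (π : PMF (α × β)) (a : α) : π.map Prod.fst a = ∑' b, π (a, b) := by
  classical
  rw [map_apply, ENNReal.tsum_prod', tsum_eq_single a fun x hx => by simp [Ne.symm hx]]
  simp

theorem tsum_map_fst_sub_map_snd_le (π : PMF (α × α)) :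
    ∑' a, (π.map Prod.fst a - π.map Prod.snd a) ≤ π.toOuterMeasure {p | p.1 ≠ p.2} := by
  classical
  rw [toOuterMeasure_apply, ENNReal.tsum_prod']
  refine ENNReal.tsum_le_tsum fun a => ?_
  have hsnd : π (a, a) ≤ π.map Prod.snd a := by
    rw [map_apply]
    exact le_trans (by simp) (ENNReal.le_tsum (a, a))
  calc π.map Prod.fst a - π.map Prod.snd a ≤ π.map Prod.fst a - π (a, a) :=
        tsub_le_tsub_left hsnd _
    _ = ∑' b, ite (b = a) 0 (π (a, b)) := by
      rw [map_fst_apply, ENNReal.tsum_eq_add_tsum_ite a,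
        ENNReal.add_sub_cancel_left (apply_ne_top _ _)]
    _ = _ := tsum_congr fun b => by
      rcases eq_or_ne b a with rfl | h
      · simp
      · simp [h, h.symm]

end PMF

theorem tvDist_map_fst_map_snd_le {α : Type*} (π : PMF (α × α)) :
    tvDist (π.map Prod.fst) (π.map Prod.snd) ≤ π.toOuterMeasure {p | p.1 ≠ p.2} := by
  have hswap : (π.map Prod.swap).toOuterMeasure {p | p.1 ≠ p.2} =
      π.toOuterMeasure {p | p.1 ≠ p.2} := by
    rw [PMF.toOuterMeasure_map_apply]
    congr 1
    ext p
    exact ne_comm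
  have hsnd := (π.map Prod.swap).tsum_map_fst_sub_map_snd_le
  rw [PMF.map_comp, PMF.map_comp, hswap] at hsnd
  calc tvDist (π.map Prod.fst) (π.map Prod.snd)
      ≤ 2⁻¹ * (∑' a, (π.map Prod.fst a - π.map Prod.snd a) +
          ∑' a, (π.map Prod.snd a - π.map Prod.fst a)) := by
        rw [tvDist, ← ENNReal.tsum_add, one_div]
        gcongr with a
        exact max_le le_self_add le_add_self
    _ ≤ 2⁻¹ * (π.toOuterMeasure {p | p.1 ≠ p.2} + π.toOuterMeasure {p | p.1 ≠ p.2}) := by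
        gcongr
        · exact π.tsum_map_fst_sub_map_snd_le
        · exact hsnd
    _ = _ := by
        rw [← two_mul, ← mul_assoc, ENNReal.inv_mul_cancel two_ne_zero ENNReal.ofNat_ne_top,
          one_mul]

section RandomMapWalk

variable {Ω α β : Type*} (ξ : PMF Ω)

noncomputable def randomMapWalk (f : Ω → α → α) : ℕ → α → PMF α
  | 0, a => PMF.pure a
  | K + 1, a => ξ.bind fun ω => randomMapWalk f K (f ω a)

theorem randomMapWalk_succ' (f : Ω → α → α) (K : ℕ) (a : α) :
    randomMapWalk ξ f (K + 1) a =
      (randomMapWalk ξ f K a).bind fun b => ξ.bind fun ω => PMF.pure (f ω b) := by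
  induction K generalizing a with
  | zero => simp [randomMapWalk]
  | succ K ih =>
    change (ξ.bind fun ω => randomMapWalk ξ f (K + 1) (f ω a)) =
      (ξ.bind fun ω => randomMapWalk ξ f K (f ω a)).bind _
    simp_rw [ih, PMF.bind_bind]

theorem map_randomMapWalk {f : Ω → α → α} {f' : Ω → β → β} (g : α → β)
    (hg : ∀ ω a, g (f ω a) = f' ω (g a)) (K : ℕ) (a : α) :
    (randomMapWalk ξ f K a).map g = randomMapWalk ξ f' K (g a) := by
  induction K generalizing a with
  | zero => exact PMF.pure_map g a
  | succ K ih => simp only [randomMapWalk, PMF.map_bind, ih, hg]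

end RandomMapWalk

section RandomToTop

open Equiv Finset

variable {N : ℕ}

theorem val_moveToTop_apply (j i : Fin N) :
    (moveToTop j i : ℕ) =
      if (i : ℕ) = 0 then (j : ℕ) else if (i : ℕ) ≤ j then (i : ℕ) - 1 else i := by
  suffices ∀ m ≤ (j : ℕ), ((List.range m).foldl (fun acc k =>
      swap (⟨k % N, Nat.mod_lt k j.pos⟩ : Fin N)
        ⟨(k + 1) % N, Nat.mod_lt (k + 1) j.pos⟩ * acc) (1 : Perm (Fin N)) i : ℕ) =
      if (i : ℕ) = 0 then m else if (i : ℕ) ≤ m then i - 1 else i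
    from this j le_rfl
  intro m hm
  induction m with
  | zero => split_ifs <;> simp <;> omega
  | succ m ih =>
    have hm' : m % N = m := Nat.mod_eq_of_lt (by omega)
    have hm'' : (m + 1) % N = m + 1 := Nat.mod_eq_of_lt (by omega)
    rw [List.range_succ, List.foldl_append, List.foldl_cons, List.foldl_nil, Perm.mul_apply,
      swap_apply_def]
    have := ih (by omega)
    split_ifs at this ⊢ <;> simp_all [Fin.ext_iff] <;> omega

/-- `moveToTop` is indexed by the position of the moved card; the coupling needs it indexed by the
card itself, so that both decks can move the same card. -/
def moveCardToTop (c : Fin N) (e : Perm (Fin N)) : Perm (Fin N) :=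
  e * moveToTop (e⁻¹ c)

section MoveCardToTop

variable {c i : Fin N} {e : Perm (Fin N)}

theorem moveCardToTop_apply_of_val_eq_zero (hi : (i : ℕ) = 0) : moveCardToTop c e i = c := by
  have : moveToTop (e⁻¹ c) i = e⁻¹ c := Fin.ext (by rw [val_moveToTop_apply, if_pos hi])
  rw [moveCardToTop, Perm.mul_apply, this]
  exact e.apply_symm_apply c

theorem moveCardToTop_apply_of_le (hi : 0 < (i : ℕ)) (hle : (i : ℕ) ≤ e⁻¹ c) :
    moveCardToTop c e i = e ⟨i - 1, by omega⟩ := by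
  have : moveToTop (e⁻¹ c) i = ⟨i - 1, by omega⟩ :=
    Fin.ext (by rw [val_moveToTop_apply, if_neg hi.ne', if_pos hle])
  rw [moveCardToTop, Perm.mul_apply, this]

theorem moveCardToTop_apply_of_lt (hlt : (e⁻¹ c : ℕ) < i) : moveCardToTop c e i = e i := by
  have : moveToTop (e⁻¹ c) i = i :=
    Fin.ext (by rw [val_moveToTop_apply, if_neg (by omega), if_neg (by omega)])
  rw [moveCardToTop, Perm.mul_apply, this]

end MoveCardToTop

theorem rtopStep_eq_bind_moveCardToTop [NeZero N] (hN : 0 < N) (d : Perm (Fin N)) :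
    rtopStep hN d =
      (PMF.uniformOfFintype (Fin N)).bind fun c => PMF.pure (moveCardToTop c d) := by
  ext x
  simp only [rtopStep, PMF.bind_apply, PMF.uniformOfFintype_apply, tsum_fintype]
  refine Fintype.sum_equiv d _ _ fun j => ?_
  simp only [moveCardToTop, Perm.coe_inv, symm_apply_apply]

theorem rtopWalk_eq_randomMapWalk [NeZero N] (hN : 0 < N) (d : Perm (Fin N)) (K : ℕ) :
    rtopWalk hN d K = randomMapWalk (PMF.uniformOfFintype (Fin N)) moveCardToTop K d := by
  induction K with
  | zero => rfl
  | succ K ih =>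
    rw [rtopWalk, ih, randomMapWalk_succ']
    exact congrArg _ (funext (rtopStep_eq_bind_moveCardToTop hN))

noncomputable def coupledRtopWalk [NeZero N] (K : ℕ) (e : Perm (Fin N) × Perm (Fin N)) :
    PMF (Perm (Fin N) × Perm (Fin N)) :=
  randomMapWalk (PMF.uniformOfFintype (Fin N))
    (fun c e => (moveCardToTop c e.1, moveCardToTop c e.2)) K e

theorem coupledRtopWalk_map_fst [NeZero N] (hN : 0 < N) (K : ℕ)
    (e : Perm (Fin N) × Perm (Fin N)) :
    (coupledRtopWalk K e).map Prod.fst = rtopWalk hN e.1 K := by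
  rw [rtopWalk_eq_randomMapWalk, coupledRtopWalk,
    map_randomMapWalk (f' := moveCardToTop) _ _ fun _ _ => rfl]

theorem coupledRtopWalk_map_snd [NeZero N] (hN : 0 < N) (K : ℕ)
    (e : Perm (Fin N) × Perm (Fin N)) :
    (coupledRtopWalk K e).map Prod.snd = rtopWalk hN e.2 K := by
  rw [rtopWalk_eq_randomMapWalk, coupledRtopWalk,
    map_randomMapWalk (f' := moveCardToTop) _ _ fun _ _ => rfl]

theorem toOuterMeasure_coupledRtopWalk_succ [NeZero N] (K : ℕ) (e : Perm (Fin N) × Perm (Fin N))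
    (s : Set (Perm (Fin N) × Perm (Fin N))) :
    (coupledRtopWalk (K + 1) e).toOuterMeasure s =
      ∑ c, (N : ℝ≥0∞)⁻¹ *
        (coupledRtopWalk K (moveCardToTop c e.1, moveCardToTop c e.2)).toOuterMeasure s := by
  rw [coupledRtopWalk, randomMapWalk, PMF.toOuterMeasure_bind_apply, tsum_fintype]
  simp only [PMF.uniformOfFintype_apply, Fintype.card_fin]
  rfl

def AgreeOnTop (t : ℕ) (e₁ e₂ : Perm (Fin N)) : Prop :=
  ∀ i : Fin N, (i : ℕ) < t → e₁ i = e₂ i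

namespace AgreeOnTop

variable {t : ℕ} {c : Fin N} {e₁ e₂ : Perm (Fin N)}

theorem zero (e₁ e₂ : Perm (Fin N)) : AgreeOnTop 0 e₁ e₂ :=
  fun _ hi => absurd hi (Nat.not_lt_zero _)

theorem symm (h : AgreeOnTop t e₁ e₂) : AgreeOnTop t e₂ e₁ := fun i hi => (h i hi).symm

theorem eq_of_le (h : AgreeOnTop t e₁ e₂) (ht : N ≤ t) : e₁ = e₂ :=
  Equiv.ext fun i => h i (by omega)

theorem inv_apply_eq (h : AgreeOnTop t e₁ e₂) (hc : (e₁⁻¹ c : ℕ) < t) :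
    e₂⁻¹ c = e₁⁻¹ c := by
  rw [Perm.inv_eq_iff_eq, ← h _ hc]
  exact (e₁.apply_symm_apply c).symm

theorem le_inv_apply (h : AgreeOnTop t e₁ e₂) (hc : t ≤ (e₁⁻¹ c : ℕ)) :
    t ≤ (e₂⁻¹ c : ℕ) := by
  by_contra! hlt
  rw [h.symm.inv_apply_eq hlt] at hc
  omega

theorem moveCardToTop_of_lt (h : AgreeOnTop t e₁ e₂) (hc : (e₁⁻¹ c : ℕ) < t) :
    AgreeOnTop t (moveCardToTop c e₁) (moveCardToTop c e₂) := by
  have hc₂ := h.inv_apply_eq hc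
  intro i hi
  rcases Nat.eq_zero_or_pos i with h0 | h0
  · rw [moveCardToTop_apply_of_val_eq_zero h0, moveCardToTop_apply_of_val_eq_zero h0]
  by_cases hle : (i : ℕ) ≤ e₁⁻¹ c
  · rw [moveCardToTop_apply_of_le h0 hle, moveCardToTop_apply_of_le h0 (hc₂ ▸ hle)]
    exact h _ (by simp only; omega)
  · rw [moveCardToTop_apply_of_lt (by omega), moveCardToTop_apply_of_lt (by rw [hc₂]; omega)]
    exact h i hi

theorem moveCardToTop_succ_of_le (h : AgreeOnTop t e₁ e₂) (hc : t ≤ (e₁⁻¹ c : ℕ)) :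
    AgreeOnTop (t + 1) (moveCardToTop c e₁) (moveCardToTop c e₂) := by
  have hc₂ := h.le_inv_apply hc
  intro i hi
  rcases Nat.eq_zero_or_pos i with h0 | h0
  · rw [moveCardToTop_apply_of_val_eq_zero h0, moveCardToTop_apply_of_val_eq_zero h0]
  · rw [moveCardToTop_apply_of_le h0 (by omega), moveCardToTop_apply_of_le h0 (by omega)]
    exact h _ (by simp only; omega)

end AgreeOnTop

theorem card_filter_val_inv_apply_lt (e : Perm (Fin N)) {t : ℕ} (ht : t ≤ N) :
    #{c | (e⁻¹ c : ℕ) < t} = t := by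
  calc #{c | (e⁻¹ c : ℕ) < t} = #{i : Fin N | (i : ℕ) < t} :=
        card_equiv e⁻¹ fun c => by simp
    _ = t := by rw [Fin.card_filter_val_lt, min_eq_right ht]

theorem card_filter_not_val_inv_apply_lt (e : Perm (Fin N)) {t : ℕ} (ht : t ≤ N) :
    #{c | ¬(e⁻¹ c : ℕ) < t} = N - t := by
  have := card_filter_add_card_filter_not (s := univ) fun c => (e⁻¹ c : ℕ) < t
  rw [card_filter_val_inv_apply_lt e ht, card_univ, Fintype.card_fin] at this
  omega

/-- One step of the coupon-collector recursion: with `t` of the `N` cards touched, a uniformly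
chosen card is touched with probability `t / N`. -/
theorem untouchedCount_step_eq {t : ℕ} (ht : t ≤ N) (x : ℝ≥0∞) :
    (N : ℝ≥0∞)⁻¹ * (t * ((N - t : ℕ) * x) + (N - t : ℕ) * ((N - (t + 1) : ℕ) * x)) =
      (N - t : ℕ) * (((N : ℝ≥0∞) - 1) / N * x) := by
  have hnat : t * (N - t) + (N - t) * (N - (t + 1)) = (N - t) * (N - 1) := by
    obtain ⟨s, rfl⟩ := Nat.exists_eq_add_of_le ht
    rcases s with _ | s
    · simp
    · rw [show t + (s + 1) - t = s + 1 by omega, show t + (s + 1) - (t + 1) = s by omega,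
        show t + (s + 1) - 1 = t + s by omega]
      ring
  have hpred : ((N - 1 : ℕ) : ℝ≥0∞) = N - 1 := by rw [ENNReal.natCast_sub, Nat.cast_one]
  calc _ = (N : ℝ≥0∞)⁻¹ * ((t * (N - t) + (N - t) * (N - (t + 1)) : ℕ) * x) := by
        simp only [Nat.cast_add, Nat.cast_mul]
        ring
    _ = _ := by rw [hnat, Nat.cast_mul, hpred, div_eq_mul_inv]; ring

theorem toOuterMeasure_coupledRtopWalk_ne_le [NeZero N] (K : ℕ) {t : ℕ} (ht : t ≤ N)
    {e₁ e₂ : Perm (Fin N)} (h : AgreeOnTop t e₁ e₂) :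
    (coupledRtopWalk K (e₁, e₂)).toOuterMeasure {p | p.1 ≠ p.2} ≤
      (N - t : ℕ) * (((N : ℝ≥0∞) - 1) / N) ^ K := by
  induction K generalizing t e₁ e₂ with
  | zero =>
    rw [coupledRtopWalk, randomMapWalk, PMF.toOuterMeasure_pure_apply, pow_zero, mul_one]
    split_ifs with hne
    · have : t < N := lt_of_not_ge fun hle => hne (h.eq_of_le hle)
      exact Nat.one_le_cast.2 (by omega)
    · exact zero_le
  | succ K ih =>
    set r := ((N : ℝ≥0∞) - 1) / N
    rw [toOuterMeasure_coupledRtopWalk_succ]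
    calc _ ≤ ∑ c, (N : ℝ≥0∞)⁻¹ * if (e₁⁻¹ c : ℕ) < t
            then (N - t : ℕ) * r ^ K else (N - (t + 1) : ℕ) * r ^ K := by
          gcongr with c
          split_ifs with hc
          · exact ih ht (h.moveCardToTop_of_lt hc)
          · have := (e₁⁻¹ c).isLt
            exact ih (by omega) (h.moveCardToTop_succ_of_le (not_lt.1 hc))
      _ = (N : ℝ≥0∞)⁻¹ *
            (t * ((N - t : ℕ) * r ^ K) + (N - t : ℕ) * ((N - (t + 1) : ℕ) * r ^ K)) := by
          rw [← mul_sum, sum_ite, sum_const, sum_const, card_filter_val_inv_apply_lt _ ht,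
            card_filter_not_val_inv_apply_lt _ ht, nsmul_eq_mul, nsmul_eq_mul]
      _ = (N - t : ℕ) * r ^ (K + 1) := by
          rw [untouchedCount_step_eq ht, pow_succ']

end RandomToTop

/-- **Rapid mixing of the random-to-top shuffle (upper bound).** For any `N ≥ 1`, `K`, and
starting decks `d₁, d₂`, the TV distance between the `K`-step distributions is at most
`N · ((N−1)/N)^K`. -/
theorem rtopWalk_tv_le (N K : ℕ) (hN : 0 < N) (d₁ d₂ : Equiv.Perm (Fin N)) :
    tvDist (rtopWalk hN d₁ K) (rtopWalk hN d₂ K)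
      ≤ (N : ℝ≥0∞) * (((N : ℝ≥0∞) - 1) / (N : ℝ≥0∞)) ^ K := by
  have : NeZero N := ⟨hN.ne'⟩
  rw [← coupledRtopWalk_map_fst hN K (d₁, d₂), ← coupledRtopWalk_map_snd hN K (d₁, d₂)]
  calc _ ≤ (coupledRtopWalk K (d₁, d₂)).toOuterMeasure {p | p.1 ≠ p.2} :=
        tvDist_map_fst_map_snd_le _
    _ ≤ _ := by simpa using toOuterMeasure_coupledRtopWalk_ne_le K N.zero_le (.zero d₁ d₂)
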